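/- Exact CMMS does not imply α-CEF1 for any α > 0: in the instance with k classes of k agents each and k−1 items liked by every agent, assigning all k−1 items to a single class is CMMS (every class's maximin share is 0) yet every other class, with value 0, has optimistic value k−1 for the lucky class's bundle even after removing any one item (for k ≥ 3). -/

import Mathlib

open Finset

variable {n m k : ℕ}

/-- A finset of (item, agent) pairs is a partial matching. -/
def IsPartialMatching {I A : Type*} (P : Finset (I × A)) : Prop :=
  ∀ p ∈ P, ∀ q ∈ P, (p.1 = q.1 ∨ p.2 = q.2) → p = q

instance {I A : Type*} [DecidableEq I] [DecidableEq A] (P : Finset (I × A)) :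
    Decidable (IsPartialMatching P) := by
  unfold IsPartialMatching; infer_instance

/-- A matching `X` respects the likes `likes`. -/
def RespectsLikes (likes : Fin m → Finset (Fin n)) (X : Finset (Fin m × Fin n)) : Prop :=
  ∀ p ∈ X, p.2 ∈ likes p.1

instance (likes : Fin m → Finset (Fin n)) (X : Finset (Fin m × Fin n)) :
    Decidable (RespectsLikes likes X) := by
  unfold RespectsLikes; infer_instance

/-- Non-wastefulness (maximality) of an indivisible matching. -/
def NonWastefulOff (likes : Fin m → Finset (Fin n)) (X : Finset (Fin m × Fin n)) : Prop :=
  ∀ (o : Fin m), ∀ a ∈ likes o, (∃ p ∈ X, p.1 = o) ∨ (∃ p ∈ X, p.2 = a)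

/-- The agents of class `i`. -/
def classAgentsOff (classOf : Fin n → Fin k) (i : Fin k) : Finset (Fin n) :=
  Finset.univ.filter fun a => classOf a = i

/-- Optimistic valuation `V*` of the class with agents `C` for the item set `S`. -/
def VstarOff (likes : Fin m → Finset (Fin n)) (C : Finset (Fin n))
    (S : Finset (Fin m)) : ℕ :=
  ((S ×ˢ C).powerset.filter
    (fun P => RespectsLikes likes P ∧ IsPartialMatching P)).sup Finset.card

/-- The set of items matched to class `j` under `X`. -/
def itemsOff (classOf : Fin n → Fin k) (X : Finset (Fin m × Fin n)) (j : Fin k) :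
    Finset (Fin m) :=
  (X.filter fun p => classOf p.2 = j).image Prod.fst

/-- The value of class `i` under `X` (number of items matched to its agents). -/
def valueOff (classOf : Fin n → Fin k) (X : Finset (Fin m × Fin n)) (i : Fin k) : ℕ :=
  (X.filter fun p => classOf p.2 = i).card

/-- `X` is `α`-CEF1. -/
def IsCEF1Off (likes : Fin m → Finset (Fin n)) (classOf : Fin n → Fin k) (α : ℝ)
    (X : Finset (Fin m × Fin n)) : Prop :=
  ∀ i j : Fin k, itemsOff classOf X j = ∅ ∨
    ∃ o ∈ itemsOff classOf X j,
      ((valueOff classOf X i : ℝ)) ≥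
        α * (VstarOff likes (classAgentsOff classOf i) (itemsOff classOf X j \ {o}) : ℝ)

/-- The maximin share of class `i`. -/
noncomputable def mmsOff (likes : Fin m → Finset (Fin n)) (classOf : Fin n → Fin k)
    (i : Fin k) : ℕ :=
  sSup {v : ℕ | ∃ X : Finset (Fin m × Fin n),
    RespectsLikes likes X ∧ IsPartialMatching X ∧
    ∀ j : Fin k, v ≤ VstarOff likes (classAgentsOff classOf i) (itemsOff classOf X j)}

/-!
With fewer items than classes, every matching leaves some class with no items, and
`V*` of the empty bundle is `0`, so every maximin share is `0` and any matching is CMMS. Give all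
`k - 1 ≥ 2` items to class `0` and put one agent in class `1`, who then receives nothing; but after
removing any single item from class `0`'s bundle some item is left, which that agent likes, so
class `1`'s optimistic value of the rest is positive.
-/

section Matchings

variable {likes : Fin m → Finset (Fin n)} {classOf : Fin n → Fin k}

lemma VstarOff_empty (likes : Fin m → Finset (Fin n)) (C : Finset (Fin n)) :
    VstarOff likes C ∅ = 0 := by
  refine Nat.eq_zero_of_le_zero (Finset.sup_le fun P hP => ?_)
  simp only [mem_filter, mem_powerset, empty_product, subset_empty] at hP
  simp [hP.1]

lemma card_le_VstarOff {C : Finset (Fin n)} {S : Finset (Fin m)} {P : Finset (Fin m × Fin n)}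
    (hsub : P ⊆ S ×ˢ C) (hlikes : RespectsLikes likes P) (hP : IsPartialMatching P) :
    P.card ≤ VstarOff likes C S :=
  le_sup (f := Finset.card) (mem_filter.2 ⟨mem_powerset.2 hsub, hlikes, hP⟩)

lemma VstarOff_pos {C : Finset (Fin n)} {S : Finset (Fin m)} {o : Fin m} {a : Fin n}
    (ho : o ∈ S) (ha : a ∈ C) (hlike : a ∈ likes o) : 0 < VstarOff likes C S := by
  have hsingle : ({(o, a)} : Finset (Fin m × Fin n)).card ≤ VstarOff likes C S :=
    card_le_VstarOff (by simp [ho, ha]) (by simpa [RespectsLikes] using hlike)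
      (by simp [IsPartialMatching])
  simpa [Nat.one_le_iff_ne_zero, Nat.pos_iff_ne_zero] using hsingle

lemma isPartialMatching_image_graph {I A : Type*} [DecidableEq I] [DecidableEq A]
    (s : Finset I) {f : I → A} (hf : Function.Injective f) :
    IsPartialMatching (s.image fun o => (o, f o)) := by
  simp only [IsPartialMatching, mem_image]
  rintro _ ⟨o, -, rfl⟩ _ ⟨o', -, rfl⟩ h
  obtain rfl : o = o' := h.elim id (@hf o o')
  rfl

lemma exists_itemsOff_eq_empty (hmk : m < k) (classOf : Fin n → Fin k)
    {X : Finset (Fin m × Fin n)} (hX : IsPartialMatching X) :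
    ∃ j : Fin k, itemsOff classOf X j = ∅ := by
  by_contra! hne
  choose item hitem using hne
  -- distinct classes hold distinct items, since each item is matched at most once
  have hinj : Function.Injective item := by
    intro j j' he
    obtain ⟨p, hp, hpo⟩ := mem_image.1 (hitem j)
    obtain ⟨q, hq, hqo⟩ := mem_image.1 (hitem j')
    rw [mem_filter] at hp hq
    rw [← hp.2, ← hq.2, hX p hp.1 q hq.1 (.inl (by rw [hpo, hqo, he]))]
  exact hmk.not_ge (by simpa using Fintype.card_le_of_injective item hinj)

lemma mmsOff_eq_zero_of_lt (hmk : m < k) (likes : Fin m → Finset (Fin n))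
    (classOf : Fin n → Fin k) (i : Fin k) : mmsOff likes classOf i = 0 := by
  suffices h : {v : ℕ | ∃ X : Finset (Fin m × Fin n), RespectsLikes likes X ∧
      IsPartialMatching X ∧ ∀ j : Fin k,
        v ≤ VstarOff likes (classAgentsOff classOf i) (itemsOff classOf X j)} = {0} by
    rw [mmsOff, h, csSup_singleton]
  ext v
  simp only [Set.mem_ofPred_eq, Set.mem_singleton_iff]
  constructor
  · rintro ⟨X, -, hX, hv⟩
    obtain ⟨j, hj⟩ := exists_itemsOff_eq_empty hmk classOf hX
    simpa [hj, VstarOff_empty] using hv j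
  · rintro rfl
    exact ⟨∅, by simp [RespectsLikes], by simp [IsPartialMatching], fun _ => Nat.zero_le _⟩

lemma itemsOff_image_graph {f : Fin m → Fin n} {j : Fin k} (hf : ∀ o, classOf (f o) = j) :
    itemsOff classOf (univ.image fun o => (o, f o)) j = univ := by
  ext o
  simp [itemsOff, hf]

lemma valueOff_eq_zero {X : Finset (Fin m × Fin n)} {i : Fin k}
    (hX : ∀ p ∈ X, classOf p.2 ≠ i) : valueOff classOf X i = 0 :=
  card_eq_zero.2 (filter_eq_empty_iff.2 hX)

lemma not_isCEF1Off_of_valueOff_eq_zero {X : Finset (Fin m × Fin n)} {α : ℝ} (hα : 0 < α)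
    {i j : Fin k} (hvalue : valueOff classOf X i = 0)
    (hne : (itemsOff classOf X j).Nonempty)
    (hpos : ∀ o ∈ itemsOff classOf X j,
      0 < VstarOff likes (classAgentsOff classOf i) (itemsOff classOf X j \ {o})) :
    ¬ IsCEF1Off likes classOf α X := by
  intro hCEF1
  rcases hCEF1 i j with hempty | ⟨o, ho, hge⟩
  · exact hne.ne_empty hempty
  · rw [hvalue, Nat.cast_zero] at hge
    have := mul_pos hα (Nat.cast_pos.2 (hpos o ho) : (0 : ℝ) < _)
    linarith

end Matchings

/-- Exact CMMS does not imply `α`-CEF1 for any `α > 0`: for every `k ≥ 3` there is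
an instance (`k` classes of `k` agents each, `k − 1` items liked by everyone) and a
matching `X` (all items to one class) such that every class's maximin share is `0`
— so `X` is exactly CMMS — yet `X` is not `α`-CEF1 for any `α > 0`. -/
theorem stmt_15 (k : ℕ) (hk : 3 ≤ k) :
    ∃ (n m : ℕ) (classOf : Fin n → Fin k) (likes : Fin m → Finset (Fin n))
      (X : Finset (Fin m × Fin n)),
      RespectsLikes likes X ∧ IsPartialMatching X ∧
      (∀ i : Fin k, mmsOff likes classOf i = 0) ∧
      (∀ i : Fin k, mmsOff likes classOf i ≤ valueOff classOf X i) ∧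
      ∀ α : ℝ, 0 < α → ¬ IsCEF1Off likes classOf α X := by
  obtain ⟨l, rfl⟩ : ∃ l, k = l + 3 := ⟨k - 3, by omega⟩
  set classOf : Fin (l + 3) → Fin (l + 3) := fun a => if a = Fin.last _ then 1 else 0
  set likes : Fin (l + 2) → Finset (Fin (l + 3)) := fun _ => univ
  have hclass (o : Fin (l + 2)) : classOf o.castSucc = 0 := if_neg (Fin.castSucc_ne_last o)
  have hmms := mmsOff_eq_zero_of_lt (by omega) likes classOf
  refine ⟨l + 3, l + 2, classOf, likes, univ.image fun o => (o, o.castSucc),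
    fun _ _ => mem_univ _, isPartialMatching_image_graph _ (Fin.castSucc_injective _), hmms,
    fun i => (hmms i).trans_le (Nat.zero_le _), fun α hα => ?_⟩
  refine not_isCEF1Off_of_valueOff_eq_zero (i := 1) (j := 0) hα ?_ ?_ fun o _ => ?_
  · exact valueOff_eq_zero (by simp [hclass])
  · simp [itemsOff_image_graph hclass]
  · obtain ⟨o', ho'⟩ := Fintype.exists_ne_of_one_lt_card (by simp) o
    exact VstarOff_pos (o := o') (a := Fin.last _) (by simp [itemsOff_image_graph hclass, ho'])
      (by simp [classAgentsOff, classOf]) (mem_univ _)
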